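/- Property D10 for the canonical model: for every agent i ∈ Ag and all maximally consistent sets Γ, Δ, Σ, Π, if R^dt_□ Γ Δ, R^dt_□ Γ Σ, and R^dt_⊗i Σ Π, then R^dt_⊗i Δ Π (canonically ideal worlds are settled upon moments). -/

import Mathlib

/-! # Temporal Deontic STIT logic (TDS) — common definitions -/

/-- Formulas of the language L_TDS over a set `Ag` of agents, with propositional
variables indexed by `ℕ`. -/
inductive Formula (Ag : Type) : Type
  | var : ℕ → Formula Ag
  | neg : Formula Ag → Formula Ag
  | and : Formula Ag → Formula Ag → Formula Ag
  | box : Formula Ag → Formula Ag            -- □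
  | agent : Ag → Formula Ag → Formula Ag     -- [i]
  | coal : Formula Ag → Formula Ag           -- [Ag]
  | G : Formula Ag → Formula Ag
  | H : Formula Ag → Formula Ag
  | obl : Ag → Formula Ag → Formula Ag       -- ⊗_i

namespace Formula

variable {Ag : Type}

def impl (φ ψ : Formula Ag) : Formula Ag := neg (and φ (neg ψ))
def orf (φ ψ : Formula Ag) : Formula Ag := neg (and (neg φ) (neg ψ))
def diam (φ : Formula Ag) : Formula Ag := neg (box (neg φ))              -- ◇
def diamAg (i : Ag) (φ : Formula Ag) : Formula Ag := neg (agent i (neg φ)) -- ⟨i⟩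
def diamCoal (φ : Formula Ag) : Formula Ag := neg (coal (neg φ))         -- ⟨Ag⟩
def F (φ : Formula Ag) : Formula Ag := neg (G (neg φ))
def P (φ : Formula Ag) : Formula Ag := neg (H (neg φ))
def perm (i : Ag) (φ : Formula Ag) : Formula Ag := neg (obl i (neg φ))   -- ⊖_i
def bot : Formula Ag := and (var 0) (neg (var 0))
def verum : Formula Ag := neg bot

/-- name(p) := □¬p ∧ □(Gp ∧ Hp) -/
def nameF (p : ℕ) : Formula Ag :=
  and (box (neg (var p))) (box (and (G (var p)) (H (var p))))

/-- The propositional variable `p` occurs in the formula. -/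
def occurs (p : ℕ) : Formula Ag → Prop
  | var q => p = q
  | neg φ => occurs p φ
  | and φ ψ => occurs p φ ∨ occurs p ψ
  | box φ => occurs p φ
  | agent _ φ => occurs p φ
  | coal φ => occurs p φ
  | G φ => occurs p φ
  | H φ => occurs p φ
  | obl _ φ => occurs p φ

/-- Propositional (Boolean) evaluation of a formula, treating every formula whose
main connective is not `neg` or `and` as an atom valued by `v`. -/
def evalProp (v : Formula Ag → Bool) : Formula Ag → Bool
  | neg φ => ! evalProp v φ
  | and φ ψ => evalProp v φ && evalProp v ψ
  | φ => v φ

/-- φ is a propositional tautology. -/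
def Tautology (φ : Formula Ag) : Prop := ∀ v : Formula Ag → Bool, evalProp v φ = true

/-- Finite conjunction. -/
def bigAnd (l : List (Formula Ag)) : Formula Ag := l.foldr and verum

end Formula

/-- A fixed enumeration of the (finitely many) agents. -/
noncomputable def agList (Ag : Type) [Fintype Ag] : List Ag := Finset.univ.toList

open Formula in
/-- The Hilbert system TDS. -/
inductive Prv {Ag : Type} [Fintype Ag] : Formula Ag → Prop
  | taut {φ : Formula Ag} : Tautology φ → Prv φ
  -- S5 for □
  | kBox (φ ψ : Formula Ag) : Prv (impl (box (impl φ ψ)) (impl (box φ) (box ψ)))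
  | tBox (φ : Formula Ag) : Prv (impl (box φ) φ)
  | fiveBox (φ : Formula Ag) : Prv (impl (diam φ) (box (diam φ)))
  -- S5 for each [i]
  | kAg (i : Ag) (φ ψ : Formula Ag) :
      Prv (impl (agent i (impl φ ψ)) (impl (agent i φ) (agent i ψ)))
  | tAg (i : Ag) (φ : Formula Ag) : Prv (impl (agent i φ) φ)
  | fiveAg (i : Ag) (φ : Formula Ag) : Prv (impl (diamAg i φ) (agent i (diamAg i φ)))
  -- S5 for [Ag]
  | kCoal (φ ψ : Formula Ag) : Prv (impl (coal (impl φ ψ)) (impl (coal φ) (coal ψ)))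
  | tCoal (φ : Formula Ag) : Prv (impl (coal φ) φ)
  | fiveCoal (φ : Formula Ag) : Prv (impl (diamCoal φ) (coal (diamCoal φ)))
  -- A10 independence of agents
  | a10 (φs : Ag → Formula Ag) :
      Prv (impl (bigAnd ((agList Ag).map (fun i => diam (agent i (φs i)))))
                (diam (bigAnd ((agList Ag).map (fun i => agent i (φs i))))))
  -- A11
  | a11 (φs : Ag → Formula Ag) :
      Prv (impl (bigAnd ((agList Ag).map (fun i => agent i (φs i))))
                (coal (bigAnd ((agList Ag).map (fun i => φs i)))))
  -- A12 K for ⊗_i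
  | a12 (i : Ag) (φ ψ : Formula Ag) :
      Prv (impl (obl i (impl φ ψ)) (impl (obl i φ) (obl i ψ)))
  -- A13
  | a13 (i : Ag) (φ : Formula Ag) : Prv (impl (box φ) (and (agent i φ) (obl i φ)))
  -- A14
  | a14 (i : Ag) (φ : Formula Ag) : Prv (impl (obl i φ) (diam (agent i φ)))
  -- A15
  | a15 (i : Ag) (φ : Formula Ag) : Prv (impl (diam (obl i φ)) (box (obl i φ)))
  -- A16
  | a16 (i : Ag) (φ ψ : Formula Ag) :
      Prv (impl (box (impl (agent i φ) (agent i ψ))) (impl (obl i φ) (obl i ψ)))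
  -- KD4 for G
  | kG (φ ψ : Formula Ag) : Prv (impl (G (impl φ ψ)) (impl (G φ) (G ψ)))
  | fourG (φ : Formula Ag) : Prv (impl (G φ) (G (G φ)))
  | dG (φ : Formula Ag) : Prv (impl (G φ) (F φ))
  -- K for H
  | kH (φ ψ : Formula Ag) : Prv (impl (H (impl φ ψ)) (impl (H φ) (H ψ)))
  -- A21 - A25
  | a21 (φ : Formula Ag) : Prv (impl φ (G (P φ)))
  | a22 (φ : Formula Ag) : Prv (impl φ (H (F φ)))
  | a23 (φ : Formula Ag) : Prv (impl (F (P φ)) (orf (P φ) (orf φ (F φ))))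
  | a24 (φ : Formula Ag) : Prv (impl (P (F φ)) (orf (P φ) (orf φ (F φ))))
  | a25 (φ : Formula Ag) : Prv (impl (F (diam φ)) (diamCoal (F φ)))
  -- rules
  | mp {φ ψ : Formula Ag} : Prv (impl φ ψ) → Prv φ → Prv ψ
  | necBox {φ : Formula Ag} : Prv φ → Prv (box φ)
  | necG {φ : Formula Ag} : Prv φ → Prv (G φ)
  | necH {φ : Formula Ag} : Prv φ → Prv (H φ)
  | r2 {φ : Formula Ag} (p : ℕ) : ¬ occurs p φ → Prv (impl (nameF p) φ) → Prv φ

/-- Derivability from a set of premises (Def. 4.4 of Blackburn–de Rijke–Venema). -/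
def SetProv {Ag : Type} [Fintype Ag] (Γ : Set (Formula Ag)) (φ : Formula Ag) : Prop :=
  ∃ l : List (Formula Ag), (∀ ψ ∈ l, ψ ∈ Γ) ∧ Prv (l.foldr Formula.impl φ)

/-- Maximally consistent set. -/
def MCS {Ag : Type} [Fintype Ag] (Γ : Set (Formula Ag)) : Prop :=
  ¬ SetProv Γ Formula.bot ∧ ∀ Γ' : Set (Formula Ag), Γ ⊂ Γ' → SetProv Γ' Formula.bot

/-- The members of `Boxes`. -/
inductive BoxOp (Ag : Type) : Type
  | box : BoxOp Ag
  | coal : BoxOp Ag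
  | G : BoxOp Ag
  | H : BoxOp Ag
  | agent : Ag → BoxOp Ag
  | obl : Ag → BoxOp Ag

/-- Applying a box operator to a formula. -/
def BoxOp.apply {Ag : Type} : BoxOp Ag → Formula Ag → Formula Ag
  | .box, φ => .box φ
  | .coal, φ => .coal φ
  | .G, φ => .G φ
  | .H, φ => .H φ
  | .agent i, φ => .agent i φ
  | .obl i, φ => .obl i φ

/-- The dual diamond ⟨α⟩ of a box operator [α]. -/
def BoxOp.dual {Ag : Type} (α : BoxOp Ag) (φ : Formula Ag) : Formula Ag :=
  .neg (α.apply (.neg φ))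

/-- Canonical relation: R^dt_[α] Γ Δ iff {φ : [α]φ ∈ Γ} ⊆ Δ. -/
def canR {Ag : Type} (α : BoxOp Ag) (Γ Δ : Set (Formula Ag)) : Prop :=
  ∀ φ : Formula Ag, α.apply φ ∈ Γ → φ ∈ Δ

/-- Zig-zagging formula ⟨α₁⟩(φ₁ ∧ ⟨α₂⟩(φ₂ ∧ … ∧ ⟨αₙ⟩φₙ)…), where `l` lists the
outer pairs (αₖ, φₖ) for k < n and `(α, φ)` is the innermost pair (αₙ, φₙ). -/
def zigzag {Ag : Type} (l : List (BoxOp Ag × Formula Ag)) (α : BoxOp Ag)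
    (φ : Formula Ag) : Formula Ag :=
  l.foldr (fun p acc => p.1.dual (Formula.and p.2 acc)) (α.dual φ)

/-- IRR-theories. -/
def IRRTheory {Ag : Type} [Fintype Ag] (Γ : Set (Formula Ag)) : Prop :=
  MCS Γ ∧ (∃ p : ℕ, Formula.nameF p ∈ Γ) ∧
    ∀ (l : List (BoxOp Ag × Formula Ag)) (α : BoxOp Ag) (φ : Formula Ag),
      zigzag l α φ ∈ Γ → ∃ q : ℕ, zigzag l α (Formula.and φ (Formula.nameF q)) ∈ Γ

/-- Diamond saturated set of MCSs. -/
def DiamondSaturated {Ag : Type} (X : Set (Set (Formula Ag))) : Prop :=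
  ∀ Γ ∈ X, ∀ (α : BoxOp Ag) (φ : Formula Ag), α.dual φ ∈ Γ →
    ∃ Δ ∈ X, canR α Γ Δ ∧ φ ∈ Δ

/-- The relational frame conditions of a TDS-frame. -/
structure IsTDSFrame (Ag W : Type) (Rbox : W → W → Prop) (Rag : Ag → W → W → Prop)
    (Rcoal : W → W → Prop) (RG : W → W → Prop) (RH : W → W → Prop)
    (Robl : Ag → W → W → Prop) : Prop where
  nonempty : Nonempty W
  box_equiv : Equivalence Rbox
  ag_equiv : ∀ i : Ag, Equivalence (Rag i)
  coal_equiv : Equivalence Rcoal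
  c1 : ∀ (i : Ag) (w v : W), Rag i w v → Rbox w v
  c2 : ∀ u : Ag → W, (∀ i j : Ag, Rbox (u i) (u j)) → ∃ v : W, ∀ i : Ag, Rag i (u i) v
  c3 : ∀ w v : W, Rcoal w v → ∀ i : Ag, Rag i w v
  g_trans : ∀ w u v : W, RG w u → RG u v → RG w v
  g_serial : ∀ w : W, ∃ v : W, RG w v
  h_conv : ∀ w v : W, RH w v ↔ RG v w
  t4 : ∀ w u v : W, RG w u → RG w v → RG u v ∨ u = v ∨ RG v u
  t5 : ∀ w u v : W, RH w u → RH w v → RH u v ∨ u = v ∨ RH v u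
  t6 : ∀ w u v : W, RG w u → Rbox u v → ∃ z : W, Rcoal w z ∧ RG z v
  t7 : ∀ w u : W, Rbox w u → ¬ RG w u
  d8 : ∀ (i : Ag) (w v : W), Robl i w v → Rbox w v
  d9 : ∀ (i : Ag) (w : W), ∃ v : W, Rbox w v ∧ ∀ u : W, Rag i v u → Robl i w u
  d10 : ∀ (i : Ag) (w v u z : W), Rbox w v → Rbox w u → Robl i u z → Robl i v z
  d11 : ∀ (i : Ag) (w v : W), Robl i w v →
      ∃ u : W, Rbox w u ∧ Rag i u v ∧ ∀ z : W, Rag i u z → Robl i w z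

/-- The relational frame conditions of a TUS-frame (the non-deontic part of a
TDS-frame). -/
structure IsTUSFrame (Ag W : Type) (Rbox : W → W → Prop) (Rag : Ag → W → W → Prop)
    (Rcoal : W → W → Prop) (RG : W → W → Prop) (RH : W → W → Prop) : Prop where
  nonempty : Nonempty W
  box_equiv : Equivalence Rbox
  ag_equiv : ∀ i : Ag, Equivalence (Rag i)
  coal_equiv : Equivalence Rcoal
  c1 : ∀ (i : Ag) (w v : W), Rag i w v → Rbox w v
  c2 : ∀ u : Ag → W, (∀ i j : Ag, Rbox (u i) (u j)) → ∃ v : W, ∀ i : Ag, Rag i (u i) v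
  c3 : ∀ w v : W, Rcoal w v → ∀ i : Ag, Rag i w v
  g_trans : ∀ w u v : W, RG w u → RG u v → RG w v
  g_serial : ∀ w : W, ∃ v : W, RG w v
  h_conv : ∀ w v : W, RH w v ↔ RG v w
  t4 : ∀ w u v : W, RG w u → RG w v → RG u v ∨ u = v ∨ RG v u
  t5 : ∀ w u v : W, RH w u → RH w v → RH u v ∨ u = v ∨ RH v u
  t6 : ∀ w u v : W, RG w u → Rbox u v → ∃ z : W, Rcoal w z ∧ RG z v
  t7 : ∀ w u : W, Rbox w u → ¬ RG w u

/-- A (bare) relational Kripke model for the language L_TDS. -/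
structure KModel (Ag : Type) where
  W : Type
  Rbox : W → W → Prop
  Rag : Ag → W → W → Prop
  Rcoal : W → W → Prop
  RG : W → W → Prop
  RH : W → W → Prop
  Robl : Ag → W → W → Prop
  val : ℕ → W → Prop

/-- Standard Kripke satisfaction. -/
def KModel.sat {Ag : Type} (M : KModel Ag) : Formula Ag → M.W → Prop
  | .var p, w => M.val p w
  | .neg φ, w => ¬ M.sat φ w
  | .and φ ψ, w => M.sat φ w ∧ M.sat ψ w
  | .box φ, w => ∀ u : M.W, M.Rbox w u → M.sat φ u
  | .agent i φ, w => ∀ u : M.W, M.Rag i w u → M.sat φ u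
  | .coal φ, w => ∀ u : M.W, M.Rcoal w u → M.sat φ u
  | .G φ, w => ∀ u : M.W, M.RG w u → M.sat φ u
  | .H φ, w => ∀ u : M.W, M.RH w u → M.sat φ u
  | .obl i φ, w => ∀ u : M.W, M.Robl i w u → M.sat φ u

/-- A TDS-model: a Kripke model whose frame is a TDS-frame. -/
structure TDSModel (Ag : Type) extends KModel Ag where
  frame : IsTDSFrame Ag W Rbox Rag Rcoal RG RH Robl

/-- Satisfaction on TDS-models. -/
abbrev TDSModel.sat {Ag : Type} (M : TDSModel Ag) : Formula Ag → M.W → Prop :=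
  M.toKModel.sat

/-- The canonical model with domain restricted to a set `X` of theories. -/
def canonicalModel (Ag : Type) (X : Set (Set (Formula Ag))) : KModel Ag where
  W := X
  Rbox Γ Δ := canR BoxOp.box Γ.1 Δ.1
  Rag i Γ Δ := canR (BoxOp.agent i) Γ.1 Δ.1
  Rcoal Γ Δ := canR BoxOp.coal Γ.1 Δ.1
  RG Γ Δ := canR BoxOp.G Γ.1 Δ.1
  RH Γ Δ := canR BoxOp.H Γ.1 Δ.1
  Robl i Γ Δ := canR (BoxOp.obl i) Γ.1 Δ.1
  val p Γ := Formula.var p ∈ Γ.1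

/-- A temporal utilitarian STIT model (TUS-model). -/
structure TUSModel (Ag : Type) where
  W : Type
  Rbox : W → W → Prop
  Rag : Ag → W → W → Prop
  Rcoal : W → W → Prop
  RG : W → W → Prop
  RH : W → W → Prop
  util : W → ℕ
  val : ℕ → W → Prop
  frame : IsTUSFrame Ag W Rbox Rag Rcoal RG RH

namespace TUSModel

variable {Ag : Type}

/-- The moment R_□(w). -/
def mom (M : TUSModel Ag) (w : M.W) : Set M.W := {u | M.Rbox w u}

/-- The choice cell R_[i](v). -/
def cell (M : TUSModel Ag) (i : Ag) (v : M.W) : Set M.W := {u | M.Rag i v u}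

/-- The state R^s_[i](v) := ⋂_{k ≠ i} R_[k](v). -/
def state (M : TUSModel Ag) (i : Ag) (v : M.W) : Set M.W :=
  {u | ∀ k : Ag, k ≠ i → M.Rag k v u}

/-- Weak preference ≤ between sets of worlds. -/
def pref (M : TUSModel Ag) (A B : Set M.W) : Prop :=
  ∀ a ∈ A, ∀ b ∈ B, M.util a ≤ M.util b

/-- Weak dominance ⪯ between sets of worlds, relative to the moment of `w`:
for every state included in the moment R_□(w), the restriction of `A` is weakly
preferred to the restriction of `B`. -/
def dom (M : TUSModel Ag) (i : Ag) (w : M.W) (A B : Set M.W) : Prop :=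
  ∀ x : M.W, M.state i x ⊆ M.mom w → M.pref (A ∩ M.state i x) (B ∩ M.state i x)

/-- Strict dominance ≺. -/
def sdom (M : TUSModel Ag) (i : Ag) (w : M.W) (A B : Set M.W) : Prop :=
  M.dom i w A B ∧ ¬ M.dom i w B A

/-- Satisfaction on TUS-models, with the dominance-based clause for ⊗_i. -/
def sat (M : TUSModel Ag) : Formula Ag → M.W → Prop
  | .var p, w => M.val p w
  | .neg φ, w => ¬ M.sat φ w
  | .and φ ψ, w => M.sat φ w ∧ M.sat ψ w
  | .box φ, w => ∀ u : M.W, M.Rbox w u → M.sat φ u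
  | .agent i φ, w => ∀ u : M.W, M.Rag i w u → M.sat φ u
  | .coal φ, w => ∀ u : M.W, M.Rcoal w u → M.sat φ u
  | .G φ, w => ∀ u : M.W, M.RG w u → M.sat φ u
  | .H φ, w => ∀ u : M.W, M.RH w u → M.sat φ u
  | .obl i φ, w =>
      ∀ v : M.W, M.cell i v ⊆ M.mom w → ¬ (M.cell i v ⊆ {u : M.W | M.sat φ u}) →
        ∃ z : M.W, M.cell i z ⊆ M.mom w ∧
          M.sdom i w (M.cell i v) (M.cell i z) ∧
          M.cell i z ⊆ {u : M.W | M.sat φ u} ∧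
          ∀ x : M.W, M.cell i x ⊆ M.mom w →
            M.dom i w (M.cell i z) (M.cell i x) → M.cell i x ⊆ {u : M.W | M.sat φ u}

end TUSModel

/-- Replacing the deontic relations of a TDS-model by a utility function yields
a TUS-model over the same worlds, relations and valuation. -/
def TDSModel.toTUS {Ag : Type} (M : TDSModel Ag) (util : M.W → ℕ) : TUSModel Ag where
  W := M.W
  Rbox := M.Rbox
  Rag := M.Rag
  Rcoal := M.Rcoal
  RG := M.RG
  RH := M.RH
  util := util
  val := M.val
  frame :=
    { nonempty := M.frame.nonempty
      box_equiv := M.frame.box_equiv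
      ag_equiv := M.frame.ag_equiv
      coal_equiv := M.frame.coal_equiv
      c1 := M.frame.c1
      c2 := M.frame.c2
      c3 := M.frame.c3
      g_trans := M.frame.g_trans
      g_serial := M.frame.g_serial
      h_conv := M.frame.h_conv
      t4 := M.frame.t4
      t5 := M.frame.t5
      t6 := M.frame.t6
      t7 := M.frame.t7 }

/-! Axiom A15 makes obligations settled on a moment: an MCS Γ contains either `□⊗_i φ` or
`□¬⊗_i φ`. In the second case every □-successor Δ of Γ contains `¬⊗_i φ`, so `⊗_i φ ∈ Δ`
forces the first case, and then `⊗_i φ` lies in every □-successor S of Γ. -/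

namespace Formula

variable {Ag : Type}

@[simp]
theorem evalProp_neg (v : Formula Ag → Bool) (φ : Formula Ag) :
    evalProp v (neg φ) = !evalProp v φ := rfl

@[simp]
theorem evalProp_and (v : Formula Ag → Bool) (φ ψ : Formula Ag) :
    evalProp v (and φ ψ) = (evalProp v φ && evalProp v ψ) := rfl

@[simp]
theorem evalProp_impl (v : Formula Ag → Bool) (φ ψ : Formula Ag) :
    evalProp v (impl φ ψ) = true ↔ (evalProp v φ = true → evalProp v ψ = true) := by
  simp only [impl, evalProp_neg, evalProp_and]
  cases evalProp v φ <;> cases evalProp v ψ <;> simp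

@[simp]
theorem evalProp_bot (v : Formula Ag → Bool) : evalProp v (bot : Formula Ag) = false := by
  simp [bot]

theorem evalProp_foldr_impl (v : Formula Ag → Bool) (l : List (Formula Ag)) (χ : Formula Ag) :
    evalProp v (l.foldr impl χ) = true ↔
      ((∀ a ∈ l, evalProp v a = true) → evalProp v χ = true) := by
  induction l with
  | nil => simp
  | cons a l ih => simp only [List.foldr_cons, evalProp_impl, ih, List.forall_mem_cons]; tauto

end Formula

open Formula

variable {Ag : Type} [Fintype Ag]

namespace Prv

theorem of_evalProp_imp {φ ψ : Formula Ag} (hφ : Prv φ)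
    (h : ∀ v, evalProp v φ = true → evalProp v ψ = true) : Prv ψ :=
  mp (taut fun v => (evalProp_impl v φ ψ).2 (h v)) hφ

theorem of_evalProp_imp₂ {φ ψ χ : Formula Ag} (hφ : Prv φ) (hψ : Prv ψ)
    (h : ∀ v, evalProp v φ = true → evalProp v ψ = true → evalProp v χ = true) : Prv χ :=
  mp (mp (taut fun v => by simpa using h v) hφ) hψ

end Prv

namespace SetProv

variable {Γ : Set (Formula Ag)} {φ ψ χ : Formula Ag}

theorem of_prv (h : Prv φ) : SetProv Γ φ := ⟨[], by simp, h⟩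

theorem of_mem (h : φ ∈ Γ) : SetProv Γ φ :=
  ⟨[φ], by simpa using h, Prv.taut fun v => by simp⟩

theorem of_evalProp_imp₂ (hφ : SetProv Γ φ) (hψ : SetProv Γ ψ)
    (h : ∀ v, evalProp v φ = true → evalProp v ψ = true → evalProp v χ = true) :
    SetProv Γ χ := by
  obtain ⟨l, hl, hlφ⟩ := hφ
  obtain ⟨m, hm, hmψ⟩ := hψ
  refine ⟨l ++ m, by simpa [or_imp, forall_and] using And.intro hl hm, ?_⟩
  refine Prv.of_evalProp_imp₂ hlφ hmψ fun v hlv hmv => ?_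
  simp only [evalProp_foldr_impl, List.mem_append, or_imp, forall_and] at hlv hmv ⊢
  exact fun ⟨hl, hm⟩ => h v (hlv hl) (hmv hm)

/-- Filtering `φ` out of the premise list is sound because an implication chain
evaluates like the conjunction of its premises. -/
theorem neg_of_insert_bot (h : SetProv (insert φ Γ) bot) : SetProv Γ (neg φ) := by
  classical
  obtain ⟨l, hl, hbot⟩ := h
  refine ⟨l.filter (· ≠ φ), fun a ha => ?_, Prv.of_evalProp_imp hbot fun v hv => ?_⟩
  · obtain ⟨hal, hne⟩ := List.mem_filter.1 ha
    exact (hl a hal).resolve_left (by simpa using hne)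
  · simp only [evalProp_foldr_impl, evalProp_bot, List.mem_filter] at hv ⊢
    intro hfilt
    by_contra hφ
    refine absurd (hv fun a ha => ?_) Bool.false_ne_true
    by_cases hae : a = φ
    · simpa [hae] using hφ
    · exact hfilt a ⟨ha, by simpa using hae⟩

end SetProv

namespace MCS

variable {Γ : Set (Formula Ag)} {φ ψ : Formula Ag}

theorem neg_of_notMem (hΓ : MCS Γ) (h : φ ∉ Γ) : SetProv Γ (neg φ) :=
  SetProv.neg_of_insert_bot (hΓ.2 _ (Set.ssubset_insert h))

theorem mem_of_setProv (hΓ : MCS Γ) (h : SetProv Γ φ) : φ ∈ Γ := by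
  by_contra hφ
  exact hΓ.1 (h.of_evalProp_imp₂ (hΓ.neg_of_notMem hφ) fun v => by simp)

theorem neg_mem_of_notMem (hΓ : MCS Γ) (h : φ ∉ Γ) : neg φ ∈ Γ :=
  hΓ.mem_of_setProv (hΓ.neg_of_notMem h)

theorem neg_notMem_of_mem (hΓ : MCS Γ) (h : φ ∈ Γ) : neg φ ∉ Γ := fun hneg =>
  hΓ.1 ((SetProv.of_mem h).of_evalProp_imp₂ (SetProv.of_mem hneg) fun v => by simp)

theorem mem_of_prv_impl (hΓ : MCS Γ) (h : φ ∈ Γ) (hp : Prv (impl φ ψ)) : ψ ∈ Γ :=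
  hΓ.mem_of_setProv <|
    (SetProv.of_mem h).of_evalProp_imp₂ (SetProv.of_prv hp) fun v => by simp_all

theorem box_obl_mem_or_box_neg_obl_mem (hΓ : MCS Γ) (i : Ag) (φ : Formula Ag) :
    box (obl i φ) ∈ Γ ∨ box (neg (obl i φ)) ∈ Γ := by
  by_cases h : box (neg (obl i φ)) ∈ Γ
  · exact .inr h
  · exact .inl (hΓ.mem_of_prv_impl (hΓ.neg_mem_of_notMem h) (Prv.a15 i φ))

end MCS

theorem canonical_D10_general {Ag : Type} [Fintype Ag]
    (i : Ag) (Γ Δ S P : Set (Formula Ag)) (hΓ : MCS Γ) (hΔ : MCS Δ)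
    (h1 : canR BoxOp.box Γ Δ)
    (h2 : canR BoxOp.box Γ S) (h3 : canR (BoxOp.obl i) S P) :
    canR (BoxOp.obl i) Δ P := by
  intro φ hφ
  rcases hΓ.box_obl_mem_or_box_neg_obl_mem i φ with hbox | hbox_neg
  · exact h3 φ (h2 _ hbox)
  · exact absurd (h1 _ hbox_neg) (hΔ.neg_notMem_of_mem hφ)

/-- **Property D10 for the canonical model**: for every agent `i` and MCSs
Γ, Δ, S, P, if `R^dt_□ Γ Δ`, `R^dt_□ Γ S`, and `R^dt_⊗i S P`, then
`R^dt_⊗i Δ P`. -/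
theorem canonical_D10 {Ag : Type} [Fintype Ag] [Nonempty Ag]
    (i : Ag) (Γ Δ S P : Set (Formula Ag)) (hΓ : MCS Γ) (hΔ : MCS Δ)
    (hS : MCS S) (hP : MCS P) (h1 : canR BoxOp.box Γ Δ)
    (h2 : canR BoxOp.box Γ S) (h3 : canR (BoxOp.obl i) S P) :
    canR (BoxOp.obl i) Δ P :=
  canonical_D10_general i Γ Δ S P hΓ hΔ h1 h2 h3
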